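/- For every even integer n ≥ 0, real a ≥ 1, and x ∈ (−1, 1): ∑_{j=0}^n C(n + a − j, n − j) U_j(x) ≥ 1, with equality if and only if n = 0, or n = 2, a = 1 and x = −1/2. -/

import Mathlib

open Real Finset

/-- Generalized binomial coefficient `(a + k choose k) = ∏_{ν=1}^{k} (a+ν)/ν`. -/

noncomputable def gbinom (a : ℝ) (k : ℕ) : ℝ := ∏ ν ∈ Finset.Icc 1 k, (a + ν) / ν

/-- `Lam n a x = ∑_{j=0}^n C(n+a−j, n−j) U_j(x)`, with `U_j` the Chebyshev
polynomial of the second kind. -/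
noncomputable def Lam (n : ℕ) (a : ℝ) (x : ℝ) : ℝ :=
  ∑ j ∈ Finset.range (n + 1), gbinom a (n - j) * (Polynomial.Chebyshev.U ℝ j).eval x

lemma gbinom_zero (a : ℝ) : gbinom a 0 = 1 := by simp [gbinom]

lemma gbinom_succ (a : ℝ) (k : ℕ) :
    gbinom a (k + 1) = gbinom a k * ((a + (k + 1)) / (k + 1)) := by
  rw [gbinom, gbinom, Finset.prod_Icc_succ_top (by omega)]
  push_cast; ring_nf

lemma gbinom_nonneg {a : ℝ} (ha : -1 ≤ a) (k : ℕ) : 0 ≤ gbinom a k := by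
  apply Finset.prod_nonneg
  intro ν hν
  simp only [Finset.mem_Icc] at hν
  have h1 : (1 : ℝ) ≤ (ν : ℝ) := by exact_mod_cast hν.1
  have : (0:ℝ) ≤ a + ν := by linarith
  positivity

lemma gbinom_aux (a : ℝ) (k : ℕ) :
    gbinom (a - 1) (k + 1) = gbinom a k * (a / (k + 1)) := by
  induction k with
  | zero => simp [gbinom_succ, gbinom_zero]
  | succ k ih =>
    rw [gbinom_succ, ih, gbinom_succ]
    have h1 : ((k:ℝ) + 1) ≠ 0 := by positivity
    have h2 : ((k:ℝ) + 1 + 1) ≠ 0 := by positivity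
    push_cast
    field_simp
    ring

lemma gbinom_pascal (a : ℝ) (k : ℕ) :
    gbinom a (k + 1) = gbinom (a - 1) (k + 1) + gbinom a k := by
  rw [gbinom_aux, gbinom_succ]
  have h1 : ((k:ℝ) + 1) ≠ 0 := by positivity
  field_simp

lemma gbinom_sum (a : ℝ) (k : ℕ) :
    gbinom (a - 1) k = ∑ i ∈ Finset.range (k + 1), gbinom (a - 2) i := by
  induction k with
  | zero => simp [gbinom_zero]
  | succ k ih =>
    rw [Finset.sum_range_succ, ← ih]
    have := gbinom_pascal (a - 1) k
    rw [show a - 1 - 1 = a - 2 by ring] at this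
    linarith

lemma gbinom_vandermonde (a : ℝ) (k : ℕ) :
    gbinom a k = ∑ i ∈ Finset.range (k + 1), ((k - i + 1 : ℕ) : ℝ) * gbinom (a - 2) i := by
  induction k with
  | zero => simp [gbinom_zero]
  | succ k ih =>
    have pas := gbinom_pascal a k
    have hs := gbinom_sum a (k + 1)
    rw [pas, hs, ih, Finset.sum_range_succ (f := fun i => gbinom (a - 2) i)]
    conv_rhs => rw [Finset.sum_range_succ]
    have : ∀ i ∈ Finset.range (k+1), ((k + 1 - i + 1 : ℕ) : ℝ) * gbinom (a-2) i
        = ((k - i + 1 : ℕ) : ℝ) * gbinom (a-2) i + gbinom (a-2) i := by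
      intro i hi
      simp only [Finset.mem_range] at hi
      have : (k + 1 - i + 1 : ℕ) = (k - i + 1) + 1 := by omega
      rw [this]; push_cast; ring
    have h2 : (k + 1 - (k + 1) + 1 : ℕ) = 1 := by omega
    rw [h2, Finset.sum_congr rfl this, Finset.sum_add_distrib]
    push_cast
    ring


noncomputable def Ue (j : ℕ) (x : ℝ) : ℝ := (Polynomial.Chebyshev.U ℝ j).eval x

lemma Ue_zero (x : ℝ) : Ue 0 x = 1 := by simp [Ue, Polynomial.Chebyshev.U_zero]
lemma Ue_one (x : ℝ) : Ue 1 x = 2 * x := by simp [Ue, Polynomial.Chebyshev.U_one]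
lemma Ue_two (x : ℝ) : Ue 2 x = 4 * x ^ 2 - 1 := by simp [Ue, Polynomial.Chebyshev.U_two]

lemma Ue_rec (j : ℕ) (x : ℝ) : Ue (j + 2) x = 2 * x * Ue (j + 1) x - Ue j x := by
  have h := Polynomial.Chebyshev.U_add_two ℝ j
  have e : ((j + 2 : ℕ) : ℤ) = (j : ℤ) + 2 := by push_cast; ring
  have e1 : ((j + 1 : ℕ) : ℤ) = (j : ℤ) + 1 := by push_cast; ring
  simp only [Ue, e, e1, h]
  simp

lemma Ue_three (x : ℝ) : Ue 3 x = 8 * x ^ 3 - 4 * x := by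
  have h := Ue_rec 1 x
  norm_num [Ue_two, Ue_one] at h
  rw [h]; ring

lemma Ue_cos (j : ℕ) (θ : ℝ) : Ue j (Real.cos θ) * Real.sin θ = Real.sin ((j + 1) * θ) := by
  have h := Polynomial.Chebyshev.U_real_cos θ (j : ℤ)
  push_cast at h
  exact h

/-- Fejér-type sum. -/
noncomputable def Fj (m : ℕ) (x : ℝ) : ℝ :=
  ∑ j ∈ Finset.range (m + 1), ((m + 1 - j : ℕ) : ℝ) * Ue j x

lemma Fj_zero (x : ℝ) : Fj 0 x = 1 := by simp [Fj, Ue_zero]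
lemma Fj_one (x : ℝ) : Fj 1 x = 2 + 2 * x := by
  norm_num [Fj, Finset.sum_range_succ, Ue_zero, Ue_one]

lemma sumU (m : ℕ) (x : ℝ) :
    2 * (1 - x) * ∑ j ∈ Finset.range (m + 1), Ue j x = 1 + Ue m x - Ue (m + 1) x := by
  induction m with
  | zero => simp [Ue_zero, Ue_one]; ring
  | succ m ih =>
    rw [Finset.sum_range_succ, mul_add, ih, Ue_rec]
    ring

lemma Fj_closed (m : ℕ) (x : ℝ) :
    2 * (1 - x) * Fj m x = ((m : ℝ) + 2) - Ue (m + 1) x := by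
  induction m with
  | zero => simp [Fj_zero, Ue_one]; ring
  | succ m ih =>
    have ext : Fj m x = ∑ j ∈ Finset.range (m + 2), ((m + 1 - j : ℕ) : ℝ) * Ue j x := by
      rw [Fj, Finset.sum_range_succ (f := fun j => ((m + 1 - j : ℕ) : ℝ) * Ue j x) (n := m + 1)]
      simp
    have key : Fj (m + 1) x = Fj m x + ∑ j ∈ Finset.range (m + 2), Ue j x := by
      rw [ext, Fj, ← Finset.sum_add_distrib]
      apply Finset.sum_congr rfl
      intro j hj
      simp only [Finset.mem_range] at hj
      have : (m + 1 + 1 - j : ℕ) = (m + 1 - j) + 1 := by omega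
      rw [this]; push_cast; ring
    rw [key, mul_add, ih, sumU, Ue_rec]
    push_cast; ring


lemma abs_sin_nat_mul_le (k : ℕ) {θ : ℝ} (h : 0 ≤ Real.sin θ) :
    |Real.sin (k * θ)| ≤ k * Real.sin θ := by
  induction k with
  | zero => simp
  | succ k ih =>
    have e : ((k + 1 : ℕ) : ℝ) * θ = (k : ℝ) * θ + θ := by push_cast; ring
    rw [e, Real.sin_add]
    calc |Real.sin (k * θ) * Real.cos θ + Real.cos ((k:ℝ) * θ) * Real.sin θ|
        ≤ |Real.sin (k * θ) * Real.cos θ| + |Real.cos ((k:ℝ) * θ) * Real.sin θ| := abs_add_le _ _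
      _ = |Real.sin (k * θ)| * |Real.cos θ| + |Real.cos ((k:ℝ) * θ)| * Real.sin θ := by
          rw [abs_mul, abs_mul, abs_of_nonneg h]
      _ ≤ (k : ℝ) * Real.sin θ * 1 + 1 * Real.sin θ := by
          apply add_le_add
          · apply mul_le_mul ih (Real.abs_cos_le_one θ) (abs_nonneg _)
            positivity
          · exact mul_le_mul_of_nonneg_right (Real.abs_cos_le_one _) h
      _ = ((k + 1 : ℕ) : ℝ) * Real.sin θ := by push_cast; ring

lemma abs_sin_le_abs_add (A B : ℝ) : |Real.sin (A + B)| ≤ |Real.sin A| + |Real.sin B| := by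
  rw [Real.sin_add]
  calc |Real.sin A * Real.cos B + Real.cos A * Real.sin B|
      ≤ |Real.sin A * Real.cos B| + |Real.cos A * Real.sin B| := abs_add_le _ _
    _ ≤ |Real.sin A| * 1 + 1 * |Real.sin B| := by
        rw [abs_mul, abs_mul]
        exact add_le_add (mul_le_mul_of_nonneg_left (Real.abs_cos_le_one _) (abs_nonneg _))
          (mul_le_mul_of_nonneg_right (Real.abs_cos_le_one _) (abs_nonneg _))
    _ = |Real.sin A| + |Real.sin B| := by ring

lemma abs_sin_lt {p : ℕ} (hp : 2 ≤ p) {θ : ℝ} (hs : 0 < Real.sin θ)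
    (hc : |Real.cos θ| < 1) : |Real.sin (p * θ)| < p * Real.sin θ := by
  have e : (p : ℝ) * θ = 2 * θ + ((p - 2 : ℕ) : ℝ) * θ := by
    have : ((p - 2 : ℕ) : ℝ) = (p : ℝ) - 2 := by
      have : (2 : ℕ) ≤ p := hp
      push_cast [Nat.cast_sub this]; ring
    rw [this]; ring
  have h2 : |Real.sin (2 * θ)| < 2 * Real.sin θ := by
    rw [Real.sin_two_mul, abs_mul, abs_mul]
    have : |(2:ℝ)| = 2 := by norm_num
    rw [this, abs_of_pos hs]
    nlinarith [abs_nonneg (Real.cos θ)]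
  have h3 : |Real.sin (((p - 2 : ℕ) : ℝ) * θ)| ≤ ((p - 2 : ℕ) : ℝ) * Real.sin θ :=
    abs_sin_nat_mul_le _ hs.le
  have h4 := abs_sin_le_abs_add (2 * θ) (((p - 2 : ℕ) : ℝ) * θ)
  rw [e]
  have hcast : ((p - 2 : ℕ) : ℝ) = (p : ℝ) - 2 := by
    push_cast [Nat.cast_sub hp]; ring
  calc |Real.sin (2 * θ + ((p - 2 : ℕ) : ℝ) * θ)|
      ≤ |Real.sin (2 * θ)| + |Real.sin (((p - 2 : ℕ) : ℝ) * θ)| := h4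
    _ < 2 * Real.sin θ + ((p - 2 : ℕ) : ℝ) * Real.sin θ := by linarith
    _ = (p : ℝ) * Real.sin θ := by rw [hcast]; ring

section S4

lemma arccos_stuff {x : ℝ} (hx : x ∈ Set.Ioo (-1:ℝ) 1) :
    Real.cos (Real.arccos x) = x ∧ 0 < Real.sin (Real.arccos x) := by
  obtain ⟨h1, h2⟩ := hx
  refine ⟨Real.cos_arccos h1.le h2.le, ?_⟩
  rw [Real.sin_arccos]
  have : 0 < 1 - x ^ 2 := by nlinarith
  positivity

lemma Ue_abs_le (j : ℕ) {x : ℝ} (hx : x ∈ Set.Ioo (-1:ℝ) 1) :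
    |Ue j x| ≤ (j : ℝ) + 1 := by
  obtain ⟨hcos, hs⟩ := arccos_stuff hx
  set θ := Real.arccos x
  have h1 : Ue j x * Real.sin θ = Real.sin (((j + 1 : ℕ) : ℝ) * θ) := by
    have := Ue_cos j θ
    rw [hcos] at this
    rw [this]; push_cast; ring_nf
  have h2 : |Ue j x| * Real.sin θ ≤ ((j + 1 : ℕ) : ℝ) * Real.sin θ := by
    calc |Ue j x| * Real.sin θ = |Ue j x * Real.sin θ| := by
          rw [abs_mul, abs_of_pos hs]
      _ = |Real.sin (((j + 1 : ℕ) : ℝ) * θ)| := by rw [h1]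
      _ ≤ _ := abs_sin_nat_mul_le (j + 1) hs.le
  have := le_of_mul_le_mul_right h2 hs
  push_cast at this
  linarith

lemma Fj_nonneg (m : ℕ) {x : ℝ} (hx : x ∈ Set.Ioo (-1:ℝ) 1) : 0 ≤ Fj m x := by
  have hc := Fj_closed m x
  have hU : Ue (m + 1) x ≤ (m : ℝ) + 2 := by
    have := Ue_abs_le (m + 1) hx
    have h := abs_le.mp this
    push_cast at h
    linarith [h.2]
  have h1x : 0 < 1 - x := by linarith [hx.2]
  nlinarith

lemma Ue_strict {p : ℕ} (hp : 2 ≤ p) {x : ℝ} (hx : x ∈ Set.Ioo (-1:ℝ) 1) :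
    Ue (2 * p + 1) x < 2 * (p : ℝ) + 2 * x := by
  obtain ⟨hcos, hs⟩ := arccos_stuff hx
  set θ := Real.arccos x
  have hc1 : |Real.cos θ| < 1 := by rw [hcos]; rw [abs_lt]; exact ⟨hx.1, hx.2⟩
  have h1 : Ue (2 * p + 1) x * Real.sin θ = Real.sin ((2 * (p:ℝ) + 2) * θ) := by
    have := Ue_cos (2 * p + 1) θ
    rw [hcos] at this
    rw [this]; push_cast; ring_nf
  have hsub : Real.sin ((2 * (p:ℝ) + 2) * θ) - Real.sin (2 * θ)
      = 2 * Real.sin ((p:ℝ) * θ) * Real.cos (((p:ℝ) + 2) * θ) := by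
    rw [Real.sin_sub_sin]
    congr 2 <;> ring
  have hb : 2 * Real.sin ((p:ℝ) * θ) * Real.cos (((p:ℝ) + 2) * θ)
      ≤ 2 * |Real.sin ((p:ℝ) * θ)| := by
    have := abs_mul (Real.sin ((p:ℝ) * θ)) (Real.cos (((p:ℝ) + 2) * θ))
    have h1 := le_abs_self (Real.sin ((p:ℝ) * θ) * Real.cos (((p:ℝ) + 2) * θ))
    have h2 := Real.abs_cos_le_one (((p:ℝ) + 2) * θ)
    nlinarith [abs_nonneg (Real.sin ((p:ℝ) * θ))]
  have hstrict := abs_sin_lt hp hs hc1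
  have h2t : Real.sin (2 * θ) = 2 * x * Real.sin θ := by
    rw [Real.sin_two_mul, hcos]; ring
  have final : Ue (2 * p + 1) x * Real.sin θ < (2 * (p:ℝ) + 2 * x) * Real.sin θ := by
    rw [h1]
    have : Real.sin ((2 * (p:ℝ) + 2) * θ)
        = Real.sin (2 * θ) + 2 * Real.sin ((p:ℝ) * θ) * Real.cos (((p:ℝ) + 2) * θ) := by
      linarith
    rw [this, h2t]
    nlinarith
  exact lt_of_mul_lt_mul_right final hs.le
end S4

section S5

lemma Fj_key (n : ℕ) (x : ℝ) :
    2 * (1 - x) * (Fj n x - 1) = ((n : ℝ) + 2 * x) - Ue (n + 1) x := by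
  have := Fj_closed n x
  nlinarith [this]

lemma Fj_ge {n : ℕ} (heven : Even n) {x : ℝ} (hx : x ∈ Set.Ioo (-1:ℝ) 1) :
    1 ≤ Fj n x ∧ (Fj n x = 1 ↔ n = 0 ∨ (n = 2 ∧ x = -(1/2))) := by
  have h1x : 0 < 1 - x := by linarith [hx.2]
  rcases Nat.lt_or_ge n 4 with h4 | h4
  · interval_cases n
    · simp [Fj_zero]
    · exact absurd heven (by simp [Nat.even_iff])
    · -- n = 2
      have hk := Fj_key 2 x
      rw [Ue_three] at hk
      have hF : Fj 2 x = 1 + (2 * x + 1) ^ 2 := by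
        have h2 : 2 * (1 - x) * (Fj 2 x - 1) = 2 * (1 - x) * ((2 * x + 1) ^ 2) := by
          push_cast at hk ⊢; nlinarith [hk]
        have := mul_left_cancel₀ (by positivity : (2 * (1 - x)) ≠ 0) h2
        linarith
      constructor
      · nlinarith [sq_nonneg (2 * x + 1)]
      · rw [hF]
        constructor
        · intro h
          right
          constructor
          · rfl
          · have : (2 * x + 1) ^ 2 = 0 := by linarith
            have := pow_eq_zero_iff (n := 2) (by norm_num) |>.mp this
            linarith
        · rintro (h | ⟨-, h⟩)
          · exact absurd h (by norm_num)
          · rw [h]; norm_num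
    · exact absurd heven (by simp [Nat.even_iff])
  · -- n ≥ 4 even: strict
    obtain ⟨p, hp⟩ := heven
    have hp2 : 2 ≤ p := by omega
    have hn : n = 2 * p := by omega
    have hstr : Ue (n + 1) x < (n : ℝ) + 2 * x := by
      rw [hn]
      have := Ue_strict hp2 hx
      push_cast
      linarith
    have hk := Fj_key n x
    have hgt : 1 < Fj n x := by nlinarith
    refine ⟨hgt.le, ?_, ?_⟩
    · intro h; rw [h] at hgt; exact absurd hgt (lt_irrefl 1)
    · rintro (h | ⟨h, -⟩) <;> omega

lemma tri_sum (n j : ℕ) (hj : j ≤ n) (g : ℕ → ℝ) :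
    ∑ i ∈ Finset.range (n + 1 - j), g i
      = ∑ i ∈ Finset.range (n + 1), if j + i ≤ n then g i else 0 := by
  have hsub : Finset.range (n + 1 - j) ⊆ Finset.range (n + 1) :=
    Finset.range_subset_range.mpr (by omega)
  rw [← Finset.sum_subset hsub (fun i hi hni => by
    simp only [Finset.mem_range] at hi hni
    rw [if_neg (by omega)])]
  apply Finset.sum_congr rfl
  intro i hi
  simp only [Finset.mem_range] at hi
  rw [if_pos (by omega)]

lemma sum_triangle (n : ℕ) (f : ℕ → ℕ → ℝ) :
    ∑ j ∈ Finset.range (n + 1), ∑ i ∈ Finset.range (n + 1 - j), f j i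
      = ∑ i ∈ Finset.range (n + 1), ∑ j ∈ Finset.range (n + 1 - i), f j i := by
  calc ∑ j ∈ Finset.range (n + 1), ∑ i ∈ Finset.range (n + 1 - j), f j i
      = ∑ j ∈ Finset.range (n + 1), ∑ i ∈ Finset.range (n + 1),
          if j + i ≤ n then f j i else 0 := by
        apply Finset.sum_congr rfl
        intro j hj
        simp only [Finset.mem_range] at hj
        exact tri_sum n j (by omega) _
    _ = ∑ i ∈ Finset.range (n + 1), ∑ j ∈ Finset.range (n + 1),
          if j + i ≤ n then f j i else 0 := Finset.sum_comm
    _ = ∑ i ∈ Finset.range (n + 1), ∑ j ∈ Finset.range (n + 1 - i), f j i := by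
        apply Finset.sum_congr rfl
        intro i hi
        simp only [Finset.mem_range] at hi
        rw [tri_sum n i (by omega) (fun j => f j i)]
        apply Finset.sum_congr rfl
        intro j _
        congr 1
        simp [Nat.add_comm]
end S5

section S6

lemma master (n : ℕ) (a : ℝ) (x : ℝ) :
    Lam n a x = ∑ m ∈ Finset.range (n + 1), gbinom (a - 2) (n - m) * Fj m x := by
  have hL : Lam n a x = ∑ j ∈ Finset.range (n + 1), gbinom a (n - j) * Ue j x := rfl
  rw [hL]
  have step1 : ∀ j ∈ Finset.range (n + 1), gbinom a (n - j) * Ue j x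
      = ∑ i ∈ Finset.range (n + 1 - j),
          ((n - j - i + 1 : ℕ) : ℝ) * gbinom (a - 2) i * Ue j x := by
    intro j hj
    simp only [Finset.mem_range] at hj
    rw [gbinom_vandermonde, Finset.sum_mul, show n - j + 1 = n + 1 - j by omega]
  rw [Finset.sum_congr rfl step1,
    sum_triangle n (fun j i => ((n - j - i + 1 : ℕ) : ℝ) * gbinom (a - 2) i * Ue j x),
    ← Finset.sum_range_reflect (fun m => gbinom (a - 2) (n - m) * Fj m x) (n + 1)]
  apply Finset.sum_congr rfl
  intro i hi
  simp only [Finset.mem_range] at hi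
  rw [show n + 1 - 1 - i = n - i by omega, show n - (n - i) = i by omega,
    Fj, Finset.mul_sum, show n + 1 - i = (n - i) + 1 by omega]
  apply Finset.sum_congr rfl
  intro j hj
  simp only [Finset.mem_range] at hj
  rw [show (n - j - i + 1 : ℕ) = (n - i + 1 - j : ℕ) by omega]
  ring

theorem stmt_15 (n : ℕ) (heven : Even n) (a : ℝ) (ha : 1 ≤ a)
    (x : ℝ) (hx : x ∈ Set.Ioo (-1 : ℝ) 1) :
    1 ≤ Lam n a x ∧
    (Lam n a x = 1 ↔ n = 0 ∨ (n = 2 ∧ a = 1 ∧ x = -(1 / 2))) := by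
  obtain ⟨hx1, hx2⟩ := hx
  have hxI : x ∈ Set.Ioo (-1:ℝ) 1 := ⟨hx1, hx2⟩
  have hg : ∀ k, 0 ≤ gbinom (a - 2) k := fun k => gbinom_nonneg (by linarith) k
  have hFpos : ∀ m, 0 ≤ Fj m x := fun m => Fj_nonneg m hxI
  have hsplit : Lam n a x
      = (∑ m ∈ Finset.range n, gbinom (a - 2) (n - m) * Fj m x) + Fj n x := by
    rw [master, Finset.sum_range_succ]
    simp [gbinom_zero]
  have hrest : 0 ≤ ∑ m ∈ Finset.range n, gbinom (a - 2) (n - m) * Fj m x :=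
    Finset.sum_nonneg fun m _ => mul_nonneg (hg _) (hFpos _)
  obtain ⟨hF1, hFiff⟩ := Fj_ge heven hxI
  have hg1 : gbinom (a - 2) 1 = a - 1 := by
    rw [show gbinom (a - 2) 1 = gbinom (a - 2) (0 + 1) from rfl, gbinom_succ, gbinom_zero]; push_cast; ring
  have hg2 : gbinom (a - 2) 2 = (a - 1) * a / 2 := by
    rw [show gbinom (a - 2) 2 = gbinom (a - 2) (1 + 1) from rfl, gbinom_succ, hg1]; push_cast; ring
  refine ⟨by linarith, ?_, ?_⟩
  · intro h
    have hFn : Fj n x = 1 := le_antisymm (by linarith) hF1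
    have hrest0 : ∑ m ∈ Finset.range n, gbinom (a - 2) (n - m) * Fj m x = 0 := by linarith
    rcases hFiff.mp hFn with h0 | ⟨h2, hxv⟩
    · exact Or.inl h0
    · right
      refine ⟨h2, ?_, hxv⟩
      subst h2
      rw [Finset.sum_range_succ, Finset.sum_range_succ, Finset.sum_range_zero] at hrest0
      norm_num [Fj_zero, Fj_one, hxv, hg1, hg2] at hrest0
      nlinarith [hrest0]
  · rintro (h0 | ⟨h2, ha1, hxv⟩)
    · subst h0
      rw [hsplit]
      simp [Fj_zero]
    · subst h2; subst ha1; subst hxv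
      rw [hsplit]
      have hgg1 : gbinom (-1 : ℝ) 1 = 0 := by
        rw [show (1:ℕ) = 0 + 1 from rfl, gbinom_succ, gbinom_zero]; norm_num
      have hgg2 : gbinom (-1 : ℝ) 2 = 0 := by
        rw [show (2:ℕ) = 1 + 1 from rfl, gbinom_succ, hgg1]; ring
      have hF2 : Fj 2 (-(1/2) : ℝ) = 1 := by
        have hc := Fj_closed 2 (-(1/2) : ℝ)
        rw [Ue_three] at hc
        norm_num at hc
        linarith
      rw [Finset.sum_range_succ, Finset.sum_range_succ, Finset.sum_range_zero]
      norm_num [hgg1, hgg2, hF2]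
end S6
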